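/- arXiv:1505.04093 — 3 statements merged into one kernel-verified Lean document; each statement's English description precedes it below -/
import Mathlib

section
/- Two points (u_t, n) ∈ T and (u_b, 0) ∈ B are mutually reachable if and only if (u_t, n) ∈ g_↓, (u_b, 0) ∈ g↑, u_t ≤ r↑(u_b, 0), and u_b ≤ r_↓(u_t, n). -/
open Set

noncomputable section

/-- The piecewise linear closed curve through the vertices `x 0, x 1, …`:
`f(i+α) = (1-α) • x i + α • x (i+1)`. -/
def fCurve {k : ℕ} (x : ℕ → EuclideanSpace ℝ (Fin k)) (t : ℝ) :
    EuclideanSpace ℝ (Fin k) :=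
  (1 - Int.fract t) • x (⌊t⌋.toNat) + Int.fract t • x (⌊t⌋.toNat + 1)

/-- The extension of the curve from `[0,m]` to `[0,2m]` by `f(u) = f(u-m)` for `u > m`. -/
def fCurveExt {k : ℕ} (m : ℕ) (x : ℕ → EuclideanSpace ℝ (Fin k)) (u : ℝ) :
    EuclideanSpace ℝ (Fin k) :=
  if u ≤ m then fCurve x u else fCurve x (u - m)

/-- The rectangle `D = [0,2m] × [0,n]`. -/
def Dfull (m n : ℕ) : Set (ℝ × ℝ) :=
  Icc (0:ℝ) (2*(m:ℝ)) ×ˢ Icc (0:ℝ) (n:ℝ)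

/-- The free space `D_ε = {(u,v) ∈ D : dist (f_X u) (f_Y v) ≤ ε}`. -/
def Dfree {k : ℕ} (m n : ℕ) (x y : ℕ → EuclideanSpace ℝ (Fin k)) (ε : ℝ) :
    Set (ℝ × ℝ) :=
  {p ∈ Dfull m n | dist (fCurveExt m x p.1) (fCurve y p.2) ≤ ε}

/-- The top side `T = [0,2m] × {n}` of `D`. -/
def Tside (m n : ℕ) : Set (ℝ × ℝ) := Icc (0:ℝ) (2*(m:ℝ)) ×ˢ {(n:ℝ)}

/-- The bottom side `B = [0,2m] × {0}` of `D`. -/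
def Bside (m : ℕ) : Set (ℝ × ℝ) := Icc (0:ℝ) (2*(m:ℝ)) ×ˢ {(0:ℝ)}

/-- A monotone (non-decreasing) path: a connected subset `γ ⊆ Dε` with
`(u-u')·(v-v') ≥ 0` for all `(u,v), (u',v') ∈ γ`. -/
def IsMonPath (Dε γ : Set (ℝ × ℝ)) : Prop :=
  γ ⊆ Dε ∧ IsConnected γ ∧
    ∀ p ∈ γ, ∀ q ∈ γ, (p.1 - q.1) * (p.2 - q.2) ≥ 0

/-- Two points are mutually reachable if some monotone path contains both. -/
def Reach (Dε : Set (ℝ × ℝ)) (p q : ℝ × ℝ) : Prop :=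
  ∃ γ : Set (ℝ × ℝ), IsMonPath Dε γ ∧ p ∈ γ ∧ q ∈ γ

/-- `g↓`: the points of `Dε` mutually reachable with at least one point of `B`. -/
def gDown (m : ℕ) (Dε : Set (ℝ × ℝ)) : Set (ℝ × ℝ) :=
  {p ∈ Dε | ∃ q ∈ Bside m, Reach Dε p q}

/-- `g↑`: the points of `Dε` mutually reachable with at least one point of `T`. -/
def gUp (m n : ℕ) (Dε : Set (ℝ × ℝ)) : Set (ℝ × ℝ) :=
  {p ∈ Dε | ∃ q ∈ Tside m n, Reach Dε p q}

/-- The pointer `r↑(p)`: the maximum `u* ∈ [0,2m]` such that `p` and `(u*, n)`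
are mutually reachable. -/
def rUp (m n : ℕ) (Dε : Set (ℝ × ℝ)) (p : ℝ × ℝ) : ℝ :=
  sSup {u : ℝ | u ∈ Icc (0:ℝ) (2*(m:ℝ)) ∧ Reach Dε p (u, (n:ℝ))}

/-- The pointer `r↓(p)`: for `p` with `p.2 > 0`, the maximum `u* ∈ [0,2m]` such
that `p` and `(u*, 0)` are mutually reachable; on the bottom side `r↓(u,0) = u`. -/
def rDown (m : ℕ) (Dε : Set (ℝ × ℝ)) (p : ℝ × ℝ) : ℝ :=
  if p.2 = 0 then p.1
  else sSup {u : ℝ | u ∈ Icc (0:ℝ) (2*(m:ℝ)) ∧ Reach Dε p (u, (0:ℝ))}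

/-- The cell `D_ij = [i-1,i] × [j-1,j]`. -/
def cellD (i j : ℕ) : Set (ℝ × ℝ) :=
  Icc ((i:ℝ)-1) (i:ℝ) ×ˢ Icc ((j:ℝ)-1) (j:ℝ)

/-- The top side `T_ij` of the cell `D_ij`. -/
def cellT (i j : ℕ) : Set (ℝ × ℝ) := Icc ((i:ℝ)-1) (i:ℝ) ×ˢ {(j:ℝ)}

/-- The bottom side `B_ij` of the cell `D_ij`. -/
def cellB (i j : ℕ) : Set (ℝ × ℝ) := Icc ((i:ℝ)-1) (i:ℝ) ×ˢ {((j:ℝ)-1)}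

/-- The right side `R_ij` of the cell `D_ij`. -/
def cellR (i j : ℕ) : Set (ℝ × ℝ) := {(i:ℝ)} ×ˢ Icc ((j:ℝ)-1) (j:ℝ)

/-- The left side `L_ij` of the cell `D_ij`. -/
def cellL (i j : ℕ) : Set (ℝ × ℝ) := {((i:ℝ)-1)} ×ˢ Icc ((j:ℝ)-1) (j:ℝ)

/-- The partial order `≼` on `D`: `(u1,v1) ≼ (u2,v2)` iff `u1 ≤ u2` and `v1 ≥ v2`. -/
def prec (p q : ℝ × ℝ) : Prop := p.1 ≤ q.1 ∧ q.2 ≤ p.2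

/-!
A monotone path meets every antidiagonal `u + v = s` between two of its points exactly once, so a
monotone path from `p` up to `q` is the curve `s ↦ (U s, s - U s)`, `s ∈ [p.1 + p.2, q.1 + q.2]`,
for some `U` such that `U` and `s ↦ s - U s` are monotone. Such `U` are `1`-Lipschitz, so pointwise
limits along an ultrafilter turn limits of monotone paths in a closed free space into monotone
paths: reachability is a closed relation and the suprema `r↑(u_b, 0)`, `r↓(u_t, n)` are attained.
If `(u_b, 0)` reaches `(r↑(u_b, 0), n)` and `(r↓(u_t, n), 0)` reaches `(u_t, n)`, the two staircases
cross, and the pointwise minimum of their parametrisations is a staircase from `(u_b, 0)` to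
`(u_t, n)`.
-/

open Filter Topology

section Curve

variable {k : ℕ} (x : ℕ → EuclideanSpace ℝ (Fin k))

lemma fCurve_natCast (j : ℕ) : fCurve x j = x j := by
  simp [fCurve]

lemma fCurve_eqOn (j : ℕ) :
    EqOn (fCurve x) (fun t => (1 - (t - j)) • x j + (t - j) • x (j + 1)) (Icc (j : ℝ) (j + 1)) := by
  intro t ht
  rcases ht.2.eq_or_lt with rfl | hlt
  · rw [← Nat.cast_succ, fCurve_natCast]
    simp
  · have hfl : ⌊t⌋ = j := Int.floor_eq_iff.2 ⟨mod_cast ht.1, mod_cast hlt⟩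
    simp [fCurve, Int.fract, hfl]

lemma continuousOn_fCurve (N : ℕ) : ContinuousOn (fCurve x) (Icc 0 N) := by
  have hpiece (j : ℕ) : ContinuousOn (fCurve x) (Icc (j : ℝ) (j + 1)) :=
    (Continuous.continuousOn (by fun_prop)).congr (fCurve_eqOn x j)
  induction N with
  | zero => exact (hpiece 0).mono (Icc_subset_Icc (by simp) (by simp))
  | succ N ih =>
    rw [Nat.cast_succ, ← Icc_union_Icc_eq_Icc N.cast_nonneg (by linarith)]
    exact ih.union_of_isClosed (hpiece N) isClosed_Icc isClosed_Icc

lemma continuousOn_fCurveExt {m : ℕ} (hx : x m = x 0) :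
    ContinuousOn (fCurveExt m x) (Icc 0 (2 * m)) := by
  have hleft : ContinuousOn (fCurveExt m x) (Icc 0 m) :=
    (continuousOn_fCurve x m).congr fun u hu => if_pos hu.2
  have hright : ContinuousOn (fCurveExt m x) (Icc m (2 * m)) := by
    refine ((continuousOn_fCurve x m).comp (continuous_sub_right _).continuousOn
      fun u hu => ⟨by linarith [hu.1], by linarith [hu.2]⟩).congr fun u hu => ?_
    rcases hu.1.eq_or_lt with rfl | hlt
    · simpa [fCurveExt, fCurve_natCast, hx] using (fCurve_natCast x 0).symm
    · simp [fCurveExt, hlt.not_ge]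
  rw [← Icc_union_Icc_eq_Icc m.cast_nonneg (by linarith [(m.cast_nonneg : (0 : ℝ) ≤ m)])]
  exact hleft.union_of_isClosed hright isClosed_Icc isClosed_Icc

end Curve

lemma isClosed_Dfree {k m n : ℕ} {x : ℕ → EuclideanSpace ℝ (Fin k)}
    (y : ℕ → EuclideanSpace ℝ (Fin k)) (hx : x m = x 0) (ε : ℝ) :
    IsClosed (Dfree m n x y ε) := by
  have hX : ContinuousOn (fun p : ℝ × ℝ => fCurveExt m x p.1) (Dfull m n) :=
    (continuousOn_fCurveExt x hx).comp continuous_fst.continuousOn fun _ hp => hp.1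
  have hY : ContinuousOn (fun p : ℝ × ℝ => fCurve y p.2) (Dfull m n) :=
    (continuousOn_fCurve y n).comp continuous_snd.continuousOn fun _ hp => hp.2
  exact (continuous_dist.comp_continuousOn (hX.prodMk hY)).preimage_isClosed_of_isClosed
    (isClosed_Icc.prod isClosed_Icc) isClosed_Iic

lemma fst_sub_mul_snd_sub_nonneg_iff {p q : ℝ × ℝ} :
    0 ≤ (p.1 - q.1) * (p.2 - q.2) ↔ p ≤ q ∨ q ≤ p := by
  rw [mul_nonneg_iff, sub_nonneg, sub_nonneg, sub_nonpos, sub_nonpos, or_comm]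
  rfl

lemma isMonPath_iff {D γ : Set (ℝ × ℝ)} :
    IsMonPath D γ ↔ γ ⊆ D ∧ IsConnected γ ∧ ∀ p ∈ γ, ∀ q ∈ γ, p ≤ q ∨ q ≤ p := by
  simp only [IsMonPath, ge_iff_le, fst_sub_mul_snd_sub_nonneg_iff]

lemma le_of_le_or_le_of_add_le {r r' : ℝ × ℝ} (h : r ≤ r' ∨ r' ≤ r)
    (hs : r.1 + r.2 ≤ r'.1 + r'.2) : r ≤ r' := by
  rcases h with h | h
  · exact h
  · exact ⟨by linarith [h.1, h.2], by linarith [h.1, h.2]⟩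

section Reach

variable {D : Set (ℝ × ℝ)} {p q : ℝ × ℝ}

lemma Reach.symm (h : Reach D p q) : Reach D q p :=
  let ⟨γ, hγ, hp, hq⟩ := h
  ⟨γ, hγ, hq, hp⟩

lemma Reach.mem_left (h : Reach D p q) : p ∈ D :=
  let ⟨_, hγ, hp, _⟩ := h
  hγ.1 hp

lemma Reach.le_or_le (h : Reach D p q) : p ≤ q ∨ q ≤ p :=
  let ⟨_, hγ, hp, hq⟩ := h
  (isMonPath_iff.1 hγ).2.2 p hp q hq

lemma Reach.le_of_snd_lt (h : Reach D p q) (h₂ : p.2 < q.2) : p ≤ q :=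
  h.le_or_le.resolve_right fun h' => h₂.not_ge h'.2

end Reach

def stairPoint (U : ℝ → ℝ) (s : ℝ) : ℝ × ℝ := (U s, s - U s)

def IsStairPath (D : Set (ℝ × ℝ)) (U : ℝ → ℝ) (p q : ℝ × ℝ) : Prop :=
  p ≤ q ∧ Monotone (stairPoint U) ∧ stairPoint U (p.1 + p.2) = p ∧
    stairPoint U (q.1 + q.2) = q ∧ MapsTo (stairPoint U) (Icc (p.1 + p.2) (q.1 + q.2)) D

section Staircase

variable {U : ℝ → ℝ}

lemma stairPoint_add_eq_iff {p : ℝ × ℝ} : stairPoint U (p.1 + p.2) = p ↔ U (p.1 + p.2) = p.1 := by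
  refine ⟨congrArg Prod.fst, fun h => Prod.ext h ?_⟩
  simp only [stairPoint, h, add_sub_cancel_left]

lemma monotone_stairPoint_iff :
    Monotone (stairPoint U) ↔ Monotone U ∧ Monotone fun s => s - U s :=
  ⟨fun h => ⟨fun _ _ hs => (h hs).1, fun _ _ hs => (h hs).2⟩,
    fun h _ _ hs => ⟨h.1 hs, h.2 hs⟩⟩

lemma Monotone.lipschitzWith_of_stairPoint (hU : Monotone (stairPoint U)) : LipschitzWith 1 U := by
  obtain ⟨h₁, h₂⟩ := monotone_stairPoint_iff.1 hU
  refine LipschitzWith.of_le_add fun s s' => ?_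
  rw [Real.dist_eq]
  rcases le_total s s' with h | h
  · linarith [h₁ h, abs_nonneg (s - s')]
  · have := h₂ h
    dsimp only at this
    linarith [le_abs_self (s - s')]

lemma Monotone.continuous_stairPoint (hU : Monotone (stairPoint U)) :
    Continuous (stairPoint U) :=
  have hc := hU.lipschitzWith_of_stairPoint.continuous
  hc.prodMk (continuous_id.sub hc)

lemma reach_stairPoint {D : Set (ℝ × ℝ)} {a b : ℝ} (hU : Monotone (stairPoint U)) (hab : a ≤ b)
    (hD : MapsTo (stairPoint U) (Icc a b) D) : Reach D (stairPoint U a) (stairPoint U b) := by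
  refine ⟨stairPoint U '' Icc a b, isMonPath_iff.2 ⟨hD.image_subset,
    (isConnected_Icc hab).image _ hU.continuous_stairPoint.continuousOn, ?_⟩,
    mem_image_of_mem _ ⟨le_rfl, hab⟩, mem_image_of_mem _ ⟨hab, le_rfl⟩⟩
  rintro _ ⟨s, -, rfl⟩ _ ⟨s', -, rfl⟩
  exact (le_total s s').imp (fun h => hU h) (fun h => hU h)

lemma IsStairPath.reach {D : Set (ℝ × ℝ)} {p q : ℝ × ℝ} (h : IsStairPath D U p q) :
    Reach D p q := by
  obtain ⟨hpq, hU, hp, hq, hD⟩ := h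
  rw [← hp, ← hq]
  exact reach_stairPoint hU (add_le_add hpq.1 hpq.2) hD

lemma monotone_sub_clamp (a b : ℝ) : Monotone fun s : ℝ => s - max a (min s b) := by
  intro s s' h
  simp only [max_def, min_def]
  split_ifs <;> linarith

lemma Reach.exists_isStairPath {D : Set (ℝ × ℝ)} {p q : ℝ × ℝ} (h : Reach D p q) (hpq : p ≤ q) :
    ∃ U, IsStairPath D U p q := by
  obtain ⟨γ, hγ, hp, hq⟩ := h
  obtain ⟨hγD, hγc, hchain⟩ := isMonPath_iff.1 hγ
  set a := p.1 + p.2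
  set b := q.1 + q.2
  have hab : a ≤ b := add_le_add hpq.1 hpq.2
  have hmeet : ∀ s, ∃ r ∈ γ, r.1 + r.2 = max a (min s b) := fun s =>
    hγc.isPreconnected.intermediate_value hp hq (continuous_fst.add continuous_snd).continuousOn
      ⟨le_max_left _ _, max_le hab (min_le_right _ _)⟩
  choose r hrγ hrs using hmeet
  have hr : Monotone r := fun s s' h => le_of_le_or_le_of_add_le (hchain _ (hrγ s) _ (hrγ s'))
    (by rw [hrs, hrs]; exact max_le_max le_rfl (min_le_min_right b h))
  have hclamp : ∀ s ∈ Icc a b, max a (min s b) = s := fun s hs => by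
    rw [min_eq_left hs.2, max_eq_right hs.1]
  have hr_eq : ∀ s ∈ Icc a b, stairPoint (fun s => (r s).1) s = r s := fun s hs => by
    refine Prod.ext rfl ?_
    simp only [stairPoint]
    linarith [hrs s, hclamp s hs]
  have hunique : ∀ t ∈ γ, t.1 + t.2 ∈ Icc a b → r (t.1 + t.2) = t := fun t ht hs =>
    le_antisymm (le_of_le_or_le_of_add_le (hchain _ (hrγ _) _ ht) (by rw [hrs, hclamp _ hs]))
      (le_of_le_or_le_of_add_le (hchain _ ht _ (hrγ _)) (by rw [hrs, hclamp _ hs]))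
  refine ⟨fun s => (r s).1, hpq, monotone_stairPoint_iff.2 ⟨fun _ _ h => (hr h).1, ?_⟩, ?_, ?_,
    fun s hs => hr_eq s hs ▸ hγD (hrγ s)⟩
  · have := (monotone_sub_clamp a b).add fun _ _ h => (hr h).2
    convert this using 2 with s
    linarith [hrs s]
  · rw [hr_eq a ⟨le_rfl, hab⟩, hunique p hp ⟨le_rfl, hab⟩]
  · rw [hr_eq b ⟨hab, le_rfl⟩, hunique q hq ⟨hab, le_rfl⟩]

lemma reach_and_le_iff_exists_isStairPath {D : Set (ℝ × ℝ)} {p q : ℝ × ℝ} :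
    Reach D p q ∧ p ≤ q ↔ ∃ U, IsStairPath D U p q :=
  ⟨fun h => h.1.exists_isStairPath h.2, fun ⟨_, hU⟩ => ⟨hU.reach, hU.1⟩⟩

end Staircase

lemma reach_of_crossing {D : Set (ℝ × ℝ)} {h : ℝ} (hD : ∀ r ∈ D, 0 ≤ r.2 ∧ r.2 ≤ h) (hh : 0 < h)
    {ub bb ut tt : ℝ} (h₁ : Reach D (ub, 0) (tt, h)) (h₂ : Reach D (bb, 0) (ut, h))
    (hub : ub ≤ bb) (hut : ut ≤ tt) : Reach D (ub, 0) (ut, h) := by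
  obtain ⟨U₁, -, hU₁, hU₁b, -, hU₁D⟩ := h₁.exists_isStairPath (h₁.le_of_snd_lt hh)
  obtain ⟨U₂, hbu, hU₂, hU₂b, hU₂t, hU₂D⟩ := h₂.exists_isStairPath (h₂.le_of_snd_lt hh)
  rw [stairPoint_add_eq_iff] at hU₁b hU₂b hU₂t
  dsimp only at hU₁b hU₂b hU₂t hU₁D hU₂D
  rw [add_zero] at hU₁b hU₂b hU₁D hU₂D
  obtain ⟨hU₂₁, hU₂₂⟩ := monotone_stairPoint_iff.1 hU₂
  have hU₁v : ∀ s ∈ Icc ub (tt + h), 0 ≤ s - U₁ s ∧ s - U₁ s ≤ h := fun s hs => hD _ (hU₁D hs)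
  have hU₂_ge : ∀ s ≤ bb, s ≤ U₂ s := fun s hs => by
    have := hU₂₂ hs
    dsimp only at this
    linarith
  set U := fun s => min (U₁ s) (U₂ s)
  have hU : Monotone (stairPoint U) := by
    obtain ⟨hU₁₁, hU₁₂⟩ := monotone_stairPoint_iff.1 hU₁
    refine monotone_stairPoint_iff.2 ⟨hU₁₁.min hU₂₁, ?_⟩
    simpa only [U, ← max_sub_sub_left] using hU₁₂.max hU₂₂
  have hbt : bb ≤ ut := hbu.1
  have hstart : stairPoint U ub = (ub, 0) := by
    have : U ub = ub := by
      simp only [U, hU₁b]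
      exact min_eq_left (hU₂_ge ub hub)
    simp [stairPoint, this]
  have hend : stairPoint U (ut + h) = (ut, h) := by
    have : U (ut + h) = ut := by
      simp only [U, hU₂t]
      exact min_eq_right (by linarith [(hU₁v (ut + h) ⟨by linarith, by linarith⟩).2])
    simp [stairPoint, this]
  rw [← hstart, ← hend]
  refine reach_stairPoint hU (by linarith) fun s hs => ?_
  have hs₁ : s ∈ Icc ub (tt + h) := ⟨hs.1, by linarith [hs.2]⟩
  show (U s, s - U s) ∈ D
  rcases le_total s bb with hsb | hsb
  · rw [show U s = U₁ s from min_eq_left (by linarith [hU₁v s hs₁, hU₂_ge s hsb])]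
    exact hU₁D hs₁
  · rcases min_choice (U₁ s) (U₂ s) with e | e <;> simp only [U, e]
    · exact hU₁D hs₁
    · exact hU₂D ⟨hsb, hs.2⟩

lemma tendsto_apply_of_lipschitzWith {ι α β : Type*} [PseudoMetricSpace α] [PseudoMetricSpace β]
    {F : Filter ι} {f : ι → α → β} {K : NNReal} (hf : ∀ᶠ i in F, LipschitzWith K (f i))
    {x y : ι → α} (hxy : Tendsto (fun i => dist (x i) (y i)) F (𝓝 0)) {c : β}
    (h : Tendsto (fun i => f i (x i)) F (𝓝 c)) : Tendsto (fun i => f i (y i)) F (𝓝 c) :=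
  h.congr_dist <| squeeze_zero' (Eventually.of_forall fun _ => dist_nonneg)
    (hf.mono fun i hi => hi.dist_le_mul (x i) (y i)) (by simpa using hxy.const_mul (K : ℝ))

lemma Ultrafilter.exists_tendsto_apply_of_lipschitzWith {ι α β : Type*} [PseudoMetricSpace α]
    [PseudoMetricSpace β] [ProperSpace β] (𝒰 : Ultrafilter ι) {f : ι → α → β} {K : NNReal}
    (hf : ∀ᶠ i in 𝒰, LipschitzWith K (f i)) {a : α} {c : β}
    (ha : Tendsto (fun i => f i a) 𝒰 (𝓝 c)) (s : α) :
    ∃ c', Tendsto (fun i => f i s) 𝒰 (𝓝 c') := by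
  have hbound : ∀ᶠ i in 𝒰, f i s ∈ Metric.closedBall c (K * dist s a + 1) :=
    (hf.and (ha.eventually (Metric.ball_mem_nhds _ one_pos))).mono fun i hi => by
      rw [Metric.mem_closedBall]
      calc dist (f i s) c ≤ dist (f i s) (f i a) + dist (f i a) c := dist_triangle _ _ _
        _ ≤ K * dist s a + 1 := add_le_add (hi.1.dist_le_mul s a) (Metric.mem_ball.1 hi.2).le
  obtain ⟨c', -, hc'⟩ := (isCompact_closedBall c _).ultrafilter_le_nhds (𝒰.map fun i => f i s)
    (by rw [Ultrafilter.coe_map]; exact le_principal_iff.2 hbound)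
  exact ⟨c', by rwa [Ultrafilter.coe_map] at hc'⟩

/-- The parametrisations are `1`-Lipschitz and converge at `p₀.1 + p₀.2`, hence have pointwise
limits along the ultrafilter. -/
lemma exists_isStairPath_of_tendsto {ι : Type*} {D : Set (ℝ × ℝ)} (hD : IsClosed D)
    (𝒰 : Ultrafilter ι) {p q : ι → ℝ × ℝ} {p₀ q₀ : ℝ × ℝ} (hp : Tendsto p 𝒰 (𝓝 p₀))
    (hq : Tendsto q 𝒰 (𝓝 q₀)) (h : ∀ᶠ i in 𝒰, ∃ U, IsStairPath D U (p i) (q i)) :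
    ∃ U, IsStairPath D U p₀ q₀ := by
  set U : ι → ℝ → ℝ := fun i => Classical.epsilon fun V => IsStairPath D V (p i) (q i)
  have hU : ∀ᶠ i in 𝒰, IsStairPath D (U i) (p i) (q i) :=
    h.mono fun _ hi => Classical.epsilon_spec hi
  have hlip : ∀ᶠ i in 𝒰, LipschitzWith 1 (U i) :=
    hU.mono fun _ hi => hi.2.1.lipschitzWith_of_stairPoint
  have hsum : Continuous fun r : ℝ × ℝ => r.1 + r.2 := continuous_fst.add continuous_snd
  have ha := (hsum.tendsto p₀).comp hp
  have hb := (hsum.tendsto q₀).comp hq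
  have hUa : Tendsto (fun i => U i (p₀.1 + p₀.2)) 𝒰 (𝓝 p₀.1) :=
    tendsto_apply_of_lipschitzWith hlip (tendsto_iff_dist_tendsto_zero.1 ha)
      (((continuous_fst.tendsto p₀).comp hp).congr'
        (hU.mono fun _ hi => (stairPoint_add_eq_iff.1 hi.2.2.1).symm))
  have hUb : Tendsto (fun i => U i (q₀.1 + q₀.2)) 𝒰 (𝓝 q₀.1) :=
    tendsto_apply_of_lipschitzWith hlip (tendsto_iff_dist_tendsto_zero.1 hb)
      (((continuous_fst.tendsto q₀).comp hq).congr'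
        (hU.mono fun _ hi => (stairPoint_add_eq_iff.1 hi.2.2.2.1).symm))
  have hlim (s : ℝ) : ∃ c, Tendsto (fun i => U i s) 𝒰 (𝓝 c) :=
    𝒰.exists_tendsto_apply_of_lipschitzWith hlip hUa s
  choose U₀ hU₀ using hlim
  have hstair (s : ℝ) : Tendsto (fun i => stairPoint (U i) s) 𝒰 (𝓝 (stairPoint U₀ s)) :=
    (hU₀ s).prodMk_nhds (tendsto_const_nhds.sub (hU₀ s))
  refine ⟨U₀, le_of_tendsto_of_tendsto hp hq (hU.mono fun _ hi => hi.1),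
    fun s s' hs => le_of_tendsto_of_tendsto (hstair s) (hstair s') (hU.mono fun _ hi => hi.2.1 hs),
    stairPoint_add_eq_iff.2 (tendsto_nhds_unique (hU₀ _) hUa),
    stairPoint_add_eq_iff.2 (tendsto_nhds_unique (hU₀ _) hUb), fun s hs => ?_⟩
  -- approximate `s` by parameters clamped to the domains of the `U i`
  set c : ι → ℝ := fun i => max ((p i).1 + (p i).2) (min s ((q i).1 + (q i).2))
  have hc : Tendsto c 𝒰 (𝓝 s) := by
    have := ha.max ((tendsto_const_nhds (x := s)).min hb)
    rwa [min_eq_left hs.2, max_eq_right hs.1] at this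
  have hUc : Tendsto (fun i => U i (c i)) 𝒰 (𝓝 (U₀ s)) :=
    tendsto_apply_of_lipschitzWith hlip
      (by simpa [dist_comm] using tendsto_iff_dist_tendsto_zero.1 hc) (hU₀ s)
  refine hD.mem_of_tendsto (hUc.prodMk_nhds (hc.sub hUc)) (hU.mono fun i hi => ?_)
  exact hi.2.2.2.2 ⟨le_max_left _ _, max_le (add_le_add hi.1.1 hi.1.2) (min_le_right _ _)⟩

theorem isClosed_setOf_reach {D : Set (ℝ × ℝ)} (hD : IsClosed D) :
    IsClosed {x : (ℝ × ℝ) × (ℝ × ℝ) | Reach D x.1 x.2} := by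
  refine isClosed_iff_ultrafilter.2 fun x 𝒰 hx hmem => ?_
  have h₁ : Tendsto Prod.fst 𝒰 (𝓝 x.1) := (continuous_fst.tendsto x).mono_left hx
  have h₂ : Tendsto Prod.snd 𝒰 (𝓝 x.2) := (continuous_snd.tendsto x).mono_left hx
  have horient : ∀ᶠ y : (ℝ × ℝ) × (ℝ × ℝ) in 𝒰,
      (∃ U, IsStairPath D U y.1 y.2) ∨ ∃ U, IsStairPath D U y.2 y.1 :=
    mem_of_superset hmem fun y (hy : Reach D y.1 y.2) => hy.le_or_le.imp
      (fun h => reach_and_le_iff_exists_isStairPath.1 ⟨hy, h⟩)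
      (fun h => reach_and_le_iff_exists_isStairPath.1 ⟨hy.symm, h⟩)
  rcases Ultrafilter.eventually_or.1 horient with h | h
  · exact (exists_isStairPath_of_tendsto hD 𝒰 h₁ h₂ h).elim fun _ hU => hU.reach
  · exact (exists_isStairPath_of_tendsto hD 𝒰 h₂ h₁ h).elim fun _ hU => hU.reach.symm

lemma reach_csSup {D : Set (ℝ × ℝ)} (hD : IsClosed D) {S : Set ℝ} (hbdd : BddAbove S)
    {f g : ℝ → ℝ × ℝ} (hf : Continuous f) (hg : Continuous g)
    (hS : ∀ u ∈ S, Reach D (f u) (g u)) (hne : S.Nonempty) : Reach D (f (sSup S)) (g (sSup S)) :=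
  closure_minimal hS ((isClosed_setOf_reach hD).preimage (hf.prodMk hg))
    (csSup_mem_closure hne hbdd)

theorem stmt0_general
    (k m n : ℕ) (hn : 1 ≤ n)
    (x y : ℕ → EuclideanSpace ℝ (Fin k)) (hx : x m = x 0)
    (ε : ℝ)
    (Dε : Set (ℝ × ℝ)) (hDε : Dε = Dfree m n x y ε)
    (ut ub : ℝ) (hut : ut ∈ Icc (0:ℝ) (2*(m:ℝ))) (hub : ub ∈ Icc (0:ℝ) (2*(m:ℝ))) :
    Reach Dε (ut, (n:ℝ)) (ub, (0:ℝ)) ↔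
      ((ut, (n:ℝ)) ∈ gDown m Dε ∧ (ub, (0:ℝ)) ∈ gUp m n Dε ∧
        ut ≤ rUp m n Dε (ub, (0:ℝ)) ∧ ub ≤ rDown m Dε (ut, (n:ℝ))) := by
  have hn₀ : (0 : ℝ) < n := Nat.cast_pos.2 hn
  have hstrip : ∀ r ∈ Dε, 0 ≤ r.2 ∧ r.2 ≤ n := fun r hr => (hDε ▸ hr).1.2
  have hclosed : IsClosed Dε := hDε ▸ isClosed_Dfree y hx ε
  have hbdd (p : ℝ × ℝ) (v : ℝ) :
      BddAbove {u | u ∈ Icc (0 : ℝ) (2 * m) ∧ Reach Dε p (u, v)} :=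
    ⟨2 * m, fun _ hu => hu.1.2⟩
  rw [rDown, if_neg hn₀.ne']
  constructor
  · intro h
    exact ⟨⟨h.mem_left, (ub, 0), ⟨hub, rfl⟩, h⟩, ⟨h.symm.mem_left, (ut, n), ⟨hut, rfl⟩, h.symm⟩,
      le_csSup (hbdd _ _) ⟨hut, h.symm⟩, le_csSup (hbdd _ _) ⟨hub, h⟩⟩
  · rintro ⟨⟨-, ⟨b, _⟩, ⟨hb, rfl⟩, hbt⟩, ⟨-, ⟨t, _⟩, ⟨ht, rfl⟩, htb⟩, hut_le, hub_le⟩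
    have htop := reach_csSup (f := fun _ => (ub, 0)) (g := fun u => (u, n)) hclosed
      (hbdd (ub, 0) n) continuous_const (continuous_id.prodMk continuous_const) (fun _ hu => hu.2)
      ⟨t, ht, htb⟩
    have hbot := reach_csSup (f := fun _ => (ut, n)) (g := fun u => (u, 0)) hclosed
      (hbdd (ut, n) 0) continuous_const (continuous_id.prodMk continuous_const) (fun _ hu => hu.2)
      ⟨b, hb, hbt⟩
    exact (reach_of_crossing hstrip hn₀ htop hbot.symm hub_le hut_le).symm

theorem stmt0
    (k m n : ℕ) (hk : 1 ≤ k) (hm : 1 ≤ m) (hn : 1 ≤ n)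
    (x y : ℕ → EuclideanSpace ℝ (Fin k)) (hx : x m = x 0) (hy : y n = y 0)
    (ε : ℝ) (hε : 0 ≤ ε)
    (Dε : Set (ℝ × ℝ)) (hDε : Dε = Dfree m n x y ε)
    (ut ub : ℝ) (hut : ut ∈ Icc (0:ℝ) (2*(m:ℝ))) (hub : ub ∈ Icc (0:ℝ) (2*(m:ℝ))) :
    Reach Dε (ut, (n:ℝ)) (ub, (0:ℝ)) ↔
      ((ut, (n:ℝ)) ∈ gDown m Dε ∧ (ub, (0:ℝ)) ∈ gUp m n Dε ∧
        ut ≤ rUp m n Dε (ub, (0:ℝ)) ∧ ub ≤ rDown m Dε (ut, (n:ℝ))) :=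
  stmt0_general k m n hn x y hx ε Dε hDε ut ub hut hub
end
end

section
/- There exist monotone reparametrizations φ_X of X and φ_Y of Y such that d(φ_X(t), φ_Y(t)) ≤ ε for all t ∈ [0,1] if and only if there exists u ∈ [0,m] such that the points (u, 0) and (u+m, n) are mutually reachable. -/
/-!
Lifting the cyclic shifts turns a pair of reparametrizations into monotone lifts
`L_X, L_Y : [0,1] → ℝ` with `L_X 1 = L_X 0 + m` and `L_Y 1 = L_Y 0 + n`, composed with the
periodic curves. Restarting time at the moment `Y` passes its base point and extending the lifts
periodically gives a monotone curve in `D_ε` from some `(u, 0)` to `(u + m, n)`. Conversely, a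
monotone path is totally ordered by `u + v`; parametrizing it proportionally to `u + v` gives a
continuous monotone curve whose two coordinates are such lifts.
-/

open Set

noncomputable section

/-- `W_m`: continuous non-decreasing functions `w : [0,1] → [0,m]` with
`w 0 = 0` and `w 1 = m`. -/
def IsW (m : ℕ) (w : ℝ → ℝ) : Prop :=
  ContinuousOn w (Icc (0:ℝ) 1) ∧ MonotoneOn w (Icc (0:ℝ) 1) ∧
    (∀ t ∈ Icc (0:ℝ) 1, w t ∈ Icc (0:ℝ) (m:ℝ)) ∧ w 0 = 0 ∧ w 1 = m

/-- The cyclic shift of `[0,m]` by `τ`. -/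
def cshift (m : ℕ) (τ t : ℝ) : ℝ := if t + τ ≤ m then t + τ else t + τ - m

/-- A monotone reparametrization of the closed `m`-gonal curve with vertices `x`. -/
def IsReparam {k : ℕ} (m : ℕ) (x : ℕ → EuclideanSpace ℝ (Fin k))
    (φ : ℝ → EuclideanSpace ℝ (Fin k)) : Prop :=
  ∃ w : ℝ → ℝ, ∃ τ ∈ Icc (0:ℝ) (m:ℝ), IsW m w ∧
    ∀ t ∈ Icc (0:ℝ) 1, φ t = fCurve x (cshift m τ (w t))

def periodicCurve {k : ℕ} (m : ℕ) (x : ℕ → EuclideanSpace ℝ (Fin k)) (s : ℝ) :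
    EuclideanSpace ℝ (Fin k) :=
  fCurve x (m * Int.fract (s / m))

section periodicCurve

variable {k m : ℕ} {x : ℕ → EuclideanSpace ℝ (Fin k)}

lemma periodicCurve_periodic (hm : (0:ℝ) < m) : Function.Periodic (periodicCurve m x) m := by
  intro s
  simp only [periodicCurve, add_div, div_self hm.ne', Int.fract_add_one]

lemma periodicCurve_eq_fCurve (hm : (0:ℝ) < m) (hx : x m = x 0) {s : ℝ}
    (hs : s ∈ Icc (0:ℝ) m) : periodicCurve m x s = fCurve x s := by
  rcases hs.2.lt_or_eq with hlt | rfl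
  · rw [periodicCurve, Int.fract_eq_self.2 ⟨div_nonneg hs.1 hm.le, (div_lt_one hm).2 hlt⟩,
      mul_div_cancel₀ _ hm.ne']
  · simp [periodicCurve, div_self hm.ne', hx, fCurve]

lemma fCurveExt_eq_periodicCurve (hm : (0:ℝ) < m) (hx : x m = x 0) {u : ℝ}
    (hu : u ∈ Icc (0:ℝ) (2 * m)) : fCurveExt m x u = periodicCurve m x u := by
  unfold fCurveExt
  split_ifs with h
  · exact (periodicCurve_eq_fCurve hm hx ⟨hu.1, h⟩).symm
  · rw [← (periodicCurve_periodic hm).sub_eq u, periodicCurve_eq_fCurve hm hx]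
    constructor <;> linarith [hu.2]

lemma fCurve_cshift (hm : (0:ℝ) < m) (hx : x m = x 0) {τ a : ℝ} (hτ : τ ∈ Icc (0:ℝ) m)
    (ha : a ∈ Icc (0:ℝ) m) : fCurve x (cshift m τ a) = periodicCurve m x (a + τ) := by
  unfold cshift
  split_ifs with h
  · exact (periodicCurve_eq_fCurve hm hx ⟨add_nonneg ha.1 hτ.1, h⟩).symm
  · rw [← (periodicCurve_periodic hm).sub_eq (a + τ), periodicCurve_eq_fCurve hm hx]
    constructor <;> linarith [ha.2, hτ.2]

end periodicCurve

def IsMonotoneLift (p : ℝ) (L : ℝ → ℝ) : Prop :=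
  ContinuousOn L (Icc 0 1) ∧ MonotoneOn L (Icc 0 1) ∧ L 1 = L 0 + p

lemma isReparam_iff_exists_isMonotoneLift {k m : ℕ} {x : ℕ → EuclideanSpace ℝ (Fin k)}
    (hm : (0:ℝ) < m) (hx : x m = x 0) {φ : ℝ → EuclideanSpace ℝ (Fin k)} :
    IsReparam m x φ ↔ ∃ L : ℝ → ℝ, L 0 ∈ Icc (0:ℝ) m ∧ IsMonotoneLift m L ∧
      ∀ t ∈ Icc (0:ℝ) 1, φ t = periodicCurve m x (L t) := by
  constructor
  · rintro ⟨w, τ, hτ, ⟨hwc, hwm, hw, hw0, hw1⟩, hφ⟩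
    refine ⟨fun t => w t + τ, by simpa [hw0] using hτ,
      ⟨hwc.add continuousOn_const, fun s hs t ht hst => add_le_add_left (hwm hs ht hst) τ,
        by simp [hw0, hw1, add_comm]⟩,
      fun t ht => (hφ t ht).trans (fCurve_cshift hm hx hτ (hw t ht))⟩
  · rintro ⟨L, hL0, ⟨hLc, hLm, hL1⟩, hφ⟩
    have hrange : ∀ t ∈ Icc (0:ℝ) 1, L t - L 0 ∈ Icc (0:ℝ) m := fun t ht =>
      ⟨sub_nonneg.2 (hLm ⟨le_rfl, zero_le_one⟩ ht ht.1),
        by linarith [hLm ht ⟨zero_le_one, le_rfl⟩ ht.2]⟩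
    refine ⟨fun t => L t - L 0, L 0, hL0, ⟨hLc.sub continuousOn_const,
      fun s hs t ht hst => sub_le_sub_right (hLm hs ht hst) _, hrange, sub_self _,
      by simp [hL1]⟩, fun t ht => ?_⟩
    rw [hφ t ht, fCurve_cshift hm hx hL0 (hrange t ht), sub_add_cancel]

def periodicLift (L : ℝ → ℝ) (p s : ℝ) : ℝ := L (Int.fract s) + ⌊s⌋ * p

section periodicLift

variable {L : ℝ → ℝ} {p : ℝ}

lemma periodicLift_add_one (s : ℝ) : periodicLift L p (s + 1) = periodicLift L p s + p := by
  simp only [periodicLift, Int.fract_add_one, Int.floor_add_one, Int.cast_add, Int.cast_one]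
  ring

lemma periodicLift_eq_self (hL1 : L 1 = L 0 + p) {s : ℝ} (hs : s ∈ Icc (0:ℝ) 1) :
    periodicLift L p s = L s := by
  rcases hs.2.lt_or_eq with hlt | rfl
  · simp [periodicLift, Int.fract_eq_self.2 ⟨hs.1, hlt⟩,
      Int.floor_eq_zero_iff.2 ⟨hs.1, hlt⟩]
  · simp [periodicLift, hL1]

lemma IsMonotoneLift.continuous_periodicLift (hL : IsMonotoneLift p L) :
    Continuous (periodicLift L p) := by
  have h : periodicLift L p = fun s => ((fun r => L r - r * p) ∘ Int.fract) s + s * p := by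
    ext s
    simp only [periodicLift, Function.comp, ← Int.self_sub_fract s]
    ring
  rw [h]
  exact ((hL.1.sub (continuousOn_id.mul continuousOn_const)).comp_fract'' (by simp [hL.2.2])).add
    (continuous_id.mul continuous_const)

lemma IsMonotoneLift.monotone_periodicLift (hL : IsMonotoneLift p L) :
    Monotone (periodicLift L p) := by
  obtain ⟨-, hLm, hL1⟩ := hL
  have hmem : ∀ s, Int.fract s ∈ Icc (0:ℝ) 1 :=
    fun s => ⟨Int.fract_nonneg s, (Int.fract_lt_one s).le⟩
  have hp : 0 ≤ p := by
    linarith [hLm ⟨le_rfl, zero_le_one⟩ ⟨zero_le_one, le_rfl⟩ zero_le_one]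
  intro s t hst
  rcases (Int.floor_mono hst).eq_or_lt with heq | hlt
  · have hfract : Int.fract s ≤ Int.fract t := by
      rw [← Int.self_sub_floor, ← Int.self_sub_floor, heq]
      linarith
    simp only [periodicLift, heq]
    linarith [hLm (hmem s) (hmem t) hfract]
  · have hfloor : ((⌊s⌋:ℝ) + 1) * p ≤ ⌊t⌋ * p :=
      mul_le_mul_of_nonneg_right (by exact_mod_cast Int.add_one_le_of_lt hlt) hp
    have hs := hLm (hmem s) ⟨zero_le_one, le_rfl⟩ (hmem s).2
    have ht := hLm ⟨le_rfl, zero_le_one⟩ (hmem t) (hmem t).1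
    simp only [periodicLift]
    linarith

lemma periodicCurve_periodicLift {k m : ℕ} {x : ℕ → EuclideanSpace ℝ (Fin k)}
    (hm : (0:ℝ) < m) (s : ℝ) :
    periodicCurve m x (periodicLift L m s) = periodicCurve m x (L (Int.fract s)) :=
  (periodicCurve_periodic hm).int_mul ⌊s⌋ _

end periodicLift

lemma dist_le_sum_sub_sum_of_le {a b : ℝ × ℝ} (hab : a ≤ b) :
    dist a b ≤ (b.1 + b.2) - (a.1 + a.2) := by
  obtain ⟨h1, h2⟩ := Prod.le_def.1 hab
  rw [Prod.dist_eq, Real.dist_eq, Real.dist_eq, abs_sub_comm, abs_of_nonneg (sub_nonneg.2 h1),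
    abs_sub_comm, abs_of_nonneg (sub_nonneg.2 h2)]
  exact max_le (by linarith) (by linarith)

lemma reach_of_monotoneOn {D : Set (ℝ × ℝ)} {g : ℝ → ℝ × ℝ}
    (hgc : ContinuousOn g (Icc 0 1)) (hgm : MonotoneOn g (Icc 0 1))
    (hgD : MapsTo g (Icc 0 1) D) : Reach D (g 0) (g 1) := by
  refine ⟨g '' Icc 0 1, ⟨hgD.image_subset, (isConnected_Icc zero_le_one).image g hgc, ?_⟩,
    mem_image_of_mem g ⟨le_rfl, zero_le_one⟩, mem_image_of_mem g ⟨zero_le_one, le_rfl⟩⟩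
  rintro _ ⟨s, hs, rfl⟩ _ ⟨t, ht, rfl⟩
  rcases le_total s t with hst | hts
  · obtain ⟨h1, h2⟩ := Prod.le_def.1 (hgm hs ht hst)
    exact mul_nonneg_of_nonpos_of_nonpos (sub_nonpos.2 h1) (sub_nonpos.2 h2)
  · obtain ⟨h1, h2⟩ := Prod.le_def.1 (hgm ht hs hts)
    exact mul_nonneg (sub_nonneg.2 h1) (sub_nonneg.2 h2)

lemma Reach.exists_monotoneOn {D : Set (ℝ × ℝ)} {p q : ℝ × ℝ} (h : Reach D p q)
    (hpq : p ≤ q) :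
    ∃ g : ℝ → ℝ × ℝ, ContinuousOn g (Icc 0 1) ∧ MonotoneOn g (Icc 0 1) ∧
      MapsTo g (Icc 0 1) D ∧ g 0 = p ∧ g 1 = q := by
  obtain ⟨γ, ⟨hγD, hγc, hγm⟩, hp, hq⟩ := h
  set S : ℝ × ℝ → ℝ := fun a => a.1 + a.2
  have hle : ∀ a ∈ γ, ∀ b ∈ γ, S a ≤ S b → a ≤ b := by
    intro a ha b hb hab
    have := hγm a ha b hb
    refine Prod.le_def.2 ⟨?_, ?_⟩ <;> nlinarith
  have hinj : InjOn S γ := fun a ha b hb hab =>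
    le_antisymm (hle a ha b hb hab.le) (hle b hb a ha hab.ge)
  have hsurj : Icc (S p) (S q) ⊆ S '' γ :=
    (hγc.image S (by fun_prop : Continuous S).continuousOn).isPreconnected.Icc_subset
      (mem_image_of_mem S hp) (mem_image_of_mem S hq)
  have hSpq : S p ≤ S q := add_le_add hpq.1 hpq.2
  set σ : ℝ → ℝ := fun t => S p + t * (S q - S p)
  have hσ : MapsTo σ (Icc 0 1) (Icc (S p) (S q)) := fun t ht =>
    ⟨by nlinarith [ht.1], by nlinarith [ht.2]⟩
  set g : ℝ → ℝ × ℝ := fun t => Function.invFunOn S γ (σ t)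
  have hgγ : MapsTo g (Icc 0 1) γ := fun t ht => Function.invFunOn_mem (hsurj (hσ ht))
  have hSg : ∀ t ∈ Icc (0:ℝ) 1, S (g t) = σ t := fun t ht =>
    Function.invFunOn_eq (hsurj (hσ ht))
  have hgm : MonotoneOn g (Icc 0 1) := fun s hs t ht hst =>
    hle _ (hgγ hs) _ (hgγ ht) (by rw [hSg s hs, hSg t ht]; nlinarith)
  have hgl : LipschitzOnWith (Real.toNNReal (S q - S p)) g (Icc 0 1) := by
    refine LipschitzOnWith.of_dist_le_mul fun s hs t ht => ?_
    rw [Real.coe_toNNReal _ (sub_nonneg.2 hSpq)]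
    wlog hst : s ≤ t generalizing s t
    · rw [dist_comm, dist_comm s]
      exact this t ht s hs (le_of_not_ge hst)
    calc dist (g s) (g t) ≤ S (g t) - S (g s) := dist_le_sum_sub_sum_of_le (hgm hs ht hst)
      _ = (S q - S p) * dist s t := by
        rw [hSg s hs, hSg t ht, Real.dist_eq, abs_sub_comm, abs_of_nonneg (sub_nonneg.2 hst)]
        ring
  refine ⟨g, hgl.continuousOn, hgm, fun t ht => hγD (hgγ ht), ?_, ?_⟩
  · simpa [g, σ] using hinj.leftInvOn_invFunOn hp
  · simpa [g, σ] using hinj.leftInvOn_invFunOn hq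

section freeSpace

variable {k m n : ℕ} {x y : ℕ → EuclideanSpace ℝ (Fin k)} {ε : ℝ}

lemma mem_Dfree_iff (hm : (0:ℝ) < m) (hn : (0:ℝ) < n) (hx : x m = x 0) (hy : y n = y 0)
    {p : ℝ × ℝ} : p ∈ Dfree m n x y ε ↔
      p ∈ Dfull m n ∧ dist (periodicCurve m x p.1) (periodicCurve n y p.2) ≤ ε := by
  refine and_congr_right fun hp => ?_
  rw [fCurveExt_eq_periodicCurve hm hx (mem_prod.1 hp).1,
    periodicCurve_eq_fCurve hn hy (mem_prod.1 hp).2]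

lemma exists_reach_of_isMonotoneLift (hm : (0:ℝ) < m) (hn : (0:ℝ) < n) (hx : x m = x 0)
    (hy : y n = y 0) {LX LY : ℝ → ℝ} (hLX : IsMonotoneLift m LX) (hLY : IsMonotoneLift n LY)
    (hLY0 : LY 0 ∈ Icc (0:ℝ) n)
    (hd : ∀ t ∈ Icc (0:ℝ) 1,
      dist (periodicCurve m x (LX t)) (periodicCurve n y (LY t)) ≤ ε) :
    ∃ u ∈ Icc (0:ℝ) m, Reach (Dfree m n x y ε) (u, 0) (u + m, (n:ℝ)) := by
  obtain ⟨ts, hts, hLYts⟩ : ∃ ts ∈ Icc (0:ℝ) 1, LY ts = n :=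
    intermediate_value_Icc zero_le_one hLY.1 ⟨hLY0.2, by linarith [hLY.2.2, hLY0.1]⟩
  set EX := periodicLift LX m
  set EY := periodicLift LY n
  set u := toIcoMod hm 0 (EX ts)
  have hu : u ∈ Icc (0:ℝ) m := Ico_subset_Icc_self (toIcoMod_mem_Ico' hm _)
  set g : ℝ → ℝ × ℝ := fun t => (EX (t + ts) - (EX ts - u), EY (t + ts) - n)
  have hg0 : g 0 = (u, 0) := by simp [g, EY, periodicLift_eq_self hLY.2.2 hts, hLYts]
  have hg1 : g 1 = (u + m, (n:ℝ)) := by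
    simp [g, EX, EY, add_comm (1:ℝ), periodicLift_add_one, periodicLift_eq_self hLY.2.2 hts,
      hLYts, add_comm u]
  have hgm : Monotone g := fun s t hst => Prod.le_def.2
    ⟨sub_le_sub_right (hLX.monotone_periodicLift (by linarith)) _,
      sub_le_sub_right (hLY.monotone_periodicLift (by linarith)) _⟩
  have hgc : Continuous g := by
    have := hLX.continuous_periodicLift
    have := hLY.continuous_periodicLift
    fun_prop
  refine ⟨u, hu, ?_⟩
  rw [← hg0, ← hg1]
  refine reach_of_monotoneOn hgc.continuousOn (hgm.monotoneOn _) fun t ht => ?_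
  obtain ⟨⟨hlo₁, hlo₂⟩, hhi₁, hhi₂⟩ : (u, 0) ≤ g t ∧ g t ≤ (u + m, (n:ℝ)) :=
    hg0 ▸ hg1 ▸ ⟨hgm ht.1, hgm ht.2⟩
  refine (mem_Dfree_iff hm hn hx hy).2
    ⟨⟨⟨by linarith [hu.1], by linarith [hu.2]⟩, hlo₂, hhi₂⟩, ?_⟩
  have hX : periodicCurve m x (g t).1 = periodicCurve m x (LX (Int.fract (t + ts))) := by
    rw [show (g t).1 = EX (t + ts) - toIcoDiv hm 0 (EX ts) • (m:ℝ) by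
        simp only [g, u, self_sub_toIcoMod],
      (periodicCurve_periodic hm).sub_zsmul_eq, periodicCurve_periodicLift hm]
  have hY : periodicCurve n y (g t).2 = periodicCurve n y (LY (Int.fract (t + ts))) := by
    rw [(periodicCurve_periodic hn).sub_eq, periodicCurve_periodicLift hn]
  rw [hX, hY]
  exact hd _ ⟨Int.fract_nonneg _, (Int.fract_lt_one _).le⟩

end freeSpace

theorem stmt1_general
    (k m n : ℕ) (hm : 1 ≤ m) (hn : 1 ≤ n)
    (x y : ℕ → EuclideanSpace ℝ (Fin k)) (hx : x m = x 0) (hy : y n = y 0)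
    (ε : ℝ)
    (Dε : Set (ℝ × ℝ)) (hDε : Dε = Dfree m n x y ε) :
    (∃ φX φY : ℝ → EuclideanSpace ℝ (Fin k),
        IsReparam m x φX ∧ IsReparam n y φY ∧
        ∀ t ∈ Icc (0:ℝ) 1, dist (φX t) (φY t) ≤ ε) ↔
      ∃ u ∈ Icc (0:ℝ) (m:ℝ), Reach Dε (u, (0:ℝ)) (u + m, (n:ℝ)) := by
  subst hDε
  have hm' : (0:ℝ) < m := Nat.cast_pos.2 hm
  have hn' : (0:ℝ) < n := Nat.cast_pos.2 hn
  constructor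
  · rintro ⟨φX, φY, hφX, hφY, hd⟩
    obtain ⟨LX, -, hLX, hφLX⟩ := (isReparam_iff_exists_isMonotoneLift hm' hx).1 hφX
    obtain ⟨LY, hLY0, hLY, hφLY⟩ := (isReparam_iff_exists_isMonotoneLift hn' hy).1 hφY
    refine exists_reach_of_isMonotoneLift hm' hn' hx hy hLX hLY hLY0 fun t ht => ?_
    rw [← hφLX t ht, ← hφLY t ht]
    exact hd t ht
  · rintro ⟨u, hu, hreach⟩
    obtain ⟨g, hgc, hgm, hgD, hg0, hg1⟩ :=
      hreach.exists_monotoneOn (Prod.le_def.2 ⟨by linarith, hn'.le⟩)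
    have hLX : IsMonotoneLift m fun t => (g t).1 :=
      ⟨hgc.fst, monotone_fst.comp_monotoneOn hgm, by simp [hg0, hg1]⟩
    have hLY : IsMonotoneLift n fun t => (g t).2 :=
      ⟨hgc.snd, monotone_snd.comp_monotoneOn hgm, by simp [hg0, hg1]⟩
    refine ⟨fun t => periodicCurve m x (g t).1, fun t => periodicCurve n y (g t).2,
      (isReparam_iff_exists_isMonotoneLift hm' hx).2
        ⟨_, by simpa [hg0] using hu, hLX, fun _ _ => rfl⟩,
      (isReparam_iff_exists_isMonotoneLift hn' hy).2
        ⟨_, by simp [hg0], hLY, fun _ _ => rfl⟩,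
      fun t ht => ((mem_Dfree_iff hm' hn' hx hy).1 (hgD ht)).2⟩

theorem stmt1
    (k m n : ℕ) (hk : 1 ≤ k) (hm : 1 ≤ m) (hn : 1 ≤ n)
    (x y : ℕ → EuclideanSpace ℝ (Fin k)) (hx : x m = x 0) (hy : y n = y 0)
    (ε : ℝ) (hε : 0 ≤ ε)
    (Dε : Set (ℝ × ℝ)) (hDε : Dε = Dfree m n x y ε) :
    (∃ φX φY : ℝ → EuclideanSpace ℝ (Fin k),
        IsReparam m x φX ∧ IsReparam n y φY ∧
        ∀ t ∈ Icc (0:ℝ) 1, dist (φX t) (φY t) ≤ ε) ↔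
      ∃ u ∈ Icc (0:ℝ) (m:ℝ), Reach Dε (u, (0:ℝ)) (u + m, (n:ℝ)) :=
  stmt1_general k m n hm hn x y hx hy ε Dε hDε
end
end

section
/- If γ_t is a monotone path containing the points (u_t, n) and (r_t, 0), γ_b is a monotone path containing the points (u_b, 0) and (r_b, n), and u_t ≤ r_b and u_b ≤ r_t, then γ_t ∩ γ_b ≠ ∅. -/
open Set

noncomputable section

/-!
A monotone path is a chain for the componentwise order on `ℝ × ℝ`, so it meets each
anti-diagonal `u + v = s` at most once, and by connectedness exactly once for `s` between the
coordinate sums of two of its points. Parametrizing both paths by `s = u + v` makes their first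
coordinates 1-Lipschitz in `s`. On `s ∈ [r_t, u_t + n]` the path `γ_t` starts weakly to the right
of `γ_b` (at height `0`) and ends weakly to its left (at height `n`), so by the intermediate value
theorem the two parametrizations agree at some `s`.
-/

namespace IsMonPath

variable {Dε γ : Set (ℝ × ℝ)}

theorem le_of_add_le (hγ : IsMonPath Dε γ) {p q : ℝ × ℝ} (hp : p ∈ γ) (hq : q ∈ γ)
    (h : p.1 + p.2 ≤ q.1 + q.2) : p ≤ q := by
  have hpq := hγ.2.2 p hp q hq
  constructor
  · by_contra! h'
    nlinarith
  · by_contra! h'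
    nlinarith

theorem eq_of_add_eq (hγ : IsMonPath Dε γ) {p q : ℝ × ℝ} (hp : p ∈ γ) (hq : q ∈ γ)
    (h : p.1 + p.2 = q.1 + q.2) : p = q :=
  le_antisymm (hγ.le_of_add_le hp hq h.le) (hγ.le_of_add_le hq hp h.ge)

theorem exists_add_eq (hγ : IsMonPath Dε γ) {p q : ℝ × ℝ} (hp : p ∈ γ) (hq : q ∈ γ)
    {s : ℝ} (hs : s ∈ Icc (p.1 + p.2) (q.1 + q.2)) : ∃ r ∈ γ, r.1 + r.2 = s :=
  hγ.2.1.isPreconnected.intermediate_value hp hq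
    (continuous_fst.add continuous_snd).continuousOn hs

theorem exists_param_of_le (hγ : IsMonPath Dε γ) {p q : ℝ × ℝ} (hp : p ∈ γ) (hq : q ∈ γ)
    (hpq : p ≤ q) :
    ∃ P : ℝ → ℝ × ℝ, P (p.1 + p.2) = p ∧ P (q.1 + q.2) = q ∧
      (∀ s ∈ Icc (p.1 + p.2) (q.1 + q.2), P s ∈ γ ∧ (P s).1 + (P s).2 = s) ∧
      LipschitzOnWith 1 (fun s ↦ (P s).1) (Icc (p.1 + p.2) (q.1 + q.2)) := by
  choose! P hPγ hPsum using fun s (hs : s ∈ Icc (p.1 + p.2) (q.1 + q.2)) ↦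
    hγ.exists_add_eq hp hq hs
  have hI : p.1 + p.2 ≤ q.1 + q.2 := add_le_add hpq.1 hpq.2
  have hpI : p.1 + p.2 ∈ Icc (p.1 + p.2) (q.1 + q.2) := left_mem_Icc.2 hI
  have hqI : q.1 + q.2 ∈ Icc (p.1 + p.2) (q.1 + q.2) := right_mem_Icc.2 hI
  refine ⟨P, hγ.eq_of_add_eq (hPγ _ hpI) hp (hPsum _ hpI),
    hγ.eq_of_add_eq (hPγ _ hqI) hq (hPsum _ hqI), fun s hs ↦ ⟨hPγ s hs, hPsum s hs⟩, ?_⟩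
  refine LipschitzOnWith.of_le_add fun s hs t ht ↦ ?_
  have hs' := hPsum s hs
  have ht' := hPsum t ht
  rw [Real.dist_eq]
  rcases le_total s t with hst | hts
  · have := hγ.le_of_add_le (hPγ s hs) (hPγ t ht) (by linarith)
    linarith [this.1, abs_nonneg (s - t)]
  · have := hγ.le_of_add_le (hPγ t ht) (hPγ s hs) (by linarith)
    linarith [this.2, le_abs_self (s - t)]

end IsMonPath

theorem stmt3_general
    (k m n : ℕ) (hn : 1 ≤ n)
    (x y : ℕ → EuclideanSpace ℝ (Fin k))
    (ε : ℝ)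
    (Dε : Set (ℝ × ℝ)) (hDε : Dε = Dfree m n x y ε)
    (γt γb : Set (ℝ × ℝ)) (ut rt ub rb : ℝ)
    (hγt : IsMonPath Dε γt) (hut : (ut, (n:ℝ)) ∈ γt) (hrt : (rt, (0:ℝ)) ∈ γt)
    (hγb : IsMonPath Dε γb) (hub : (ub, (0:ℝ)) ∈ γb) (hrb : (rb, (n:ℝ)) ∈ γb)
    (h1 : ut ≤ rb) (h2 : ub ≤ rt) :
    (γt ∩ γb).Nonempty := by
  subst hDε
  have hn' : (0 : ℝ) < n := by exact_mod_cast hn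
  have hrt_ut : rt ≤ ut := by nlinarith [hγt.2.2 _ hut _ hrt]
  have hub_rb : ub ≤ rb := by nlinarith [hγb.2.2 _ hrb _ hub]
  obtain ⟨Pt, hPt_start, hPt_end, hPt, hPt_lip⟩ := hγt.exists_param_of_le hrt hut ⟨hrt_ut, hn'.le⟩
  obtain ⟨Pb, -, -, hPb, hPb_lip⟩ := hγb.exists_param_of_le hub hrb ⟨hub_rb, hn'.le⟩
  simp only [add_zero] at hPt_start hPt_end hPt hPt_lip hPb hPb_lip
  have hsub : Icc rt (ut + n) ⊆ Icc ub (rb + n) := Icc_subset_Icc h2 (by linarith)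
  have height (s : ℝ) (hs : s ∈ Icc rt (ut + n)) : (Pb s).2 ∈ Icc (0 : ℝ) n :=
    (hγb.1 (hPb s (hsub hs)).1).1.2
  have hrtI : rt ∈ Icc rt (ut + n) := left_mem_Icc.2 (by linarith)
  have hutI : ut + n ∈ Icc rt (ut + n) := right_mem_Icc.2 (by linarith)
  have hstart : (Pb rt).1 ≤ (Pt rt).1 := by
    rw [hPt_start]
    linarith [(height rt hrtI).1, (hPb rt (hsub hrtI)).2]
  have hend : (Pt (ut + n)).1 ≤ (Pb (ut + n)).1 := by
    rw [hPt_end]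
    linarith [(height _ hutI).2, (hPb _ (hsub hutI)).2]
  obtain ⟨s, hs, hs0⟩ := intermediate_value_Icc' (by linarith)
    (hPt_lip.continuousOn.sub (hPb_lip.continuousOn.mono hsub))
    ⟨sub_nonpos.2 hend, sub_nonneg.2 hstart⟩
  have hmeet : Pt s = Pb s :=
    Prod.ext (sub_eq_zero.1 hs0)
      (by linarith [(hPt s hs).2, (hPb s (hsub hs)).2, sub_eq_zero.1 hs0])
  exact ⟨Pt s, (hPt s hs).1, hmeet ▸ (hPb s (hsub hs)).1⟩

theorem stmt3
    (k m n : ℕ) (hk : 1 ≤ k) (hm : 1 ≤ m) (hn : 1 ≤ n)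
    (x y : ℕ → EuclideanSpace ℝ (Fin k)) (hx : x m = x 0) (hy : y n = y 0)
    (ε : ℝ) (hε : 0 ≤ ε)
    (Dε : Set (ℝ × ℝ)) (hDε : Dε = Dfree m n x y ε)
    (γt γb : Set (ℝ × ℝ)) (ut rt ub rb : ℝ)
    (hγt : IsMonPath Dε γt) (hut : (ut, (n:ℝ)) ∈ γt) (hrt : (rt, (0:ℝ)) ∈ γt)
    (hγb : IsMonPath Dε γb) (hub : (ub, (0:ℝ)) ∈ γb) (hrb : (rb, (n:ℝ)) ∈ γb)
    (h1 : ut ≤ rb) (h2 : ub ≤ rt) :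
    (γt ∩ γb).Nonempty :=
  stmt3_general k m n hn x y ε Dε hDε γt γb ut rt ub rb hγt hut hrt hγb hub hrb h1 h2
end
end
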